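/- Let M, M_c, L₀ > 0 and 0 < k ≤ l. Then the infimum h_M = inf{H_C(f) : f ∈ F_M} satisfies −∞ < h_M < 0. -/

import Mathlib

open MeasureTheory Real

set_option maxHeartbeats 1000000
open Metric Filter

noncomputable section

abbrev E3 := EuclideanSpace ℝ (Fin 3)

def Lfun (x v : E3) : ℝ := ‖x‖ ^ 2 * ‖v‖ ^ 2 - (inner ℝ x v : ℝ) ^ 2

/-- The spatial density induced by a phase-space density. -/
def rhoF (f : E3 → E3 → ℝ) (x : E3) : ℝ := ∫ v, f x v

def mF (f : E3 → E3 → ℝ) (r : ℝ) : ℝ := ∫ x in Metric.closedBall (0 : E3) r, rhoF f x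

/-- The radial gradient field `∇U_f(x) = (m(|x|)/|x|²) x/|x|`. -/
def gradUF (f : E3 → E3 → ℝ) (x : E3) : E3 := (mF f ‖x‖ / ‖x‖ ^ 3) • x

/-- The potential `U_f(x) = −∫_{|x|}^∞ m(s)/s² ds`. -/
def UF (f : E3 → E3 → ℝ) (x : E3) : ℝ := -∫ s in Set.Ioi ‖x‖, mF f s / s ^ 2

/-- Kinetic energy. -/
def Ekin (f : E3 → E3 → ℝ) : ℝ := (1/2) * ∫ x, ∫ v, ‖v‖ ^ 2 * f x v

/-- Potential energy, including the interaction with the central point mass `M_c`. -/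
def Epot (M_c : ℝ) (f : E3 → E3 → ℝ) : ℝ :=
  -(1 / (8 * π)) * (∫ x, ‖gradUF f x‖ ^ 2) - ∫ x, (M_c / ‖x‖) * rhoF f x

/-- The Casimir functional. -/
def Cas (k l L₀ : ℝ) (f : E3 → E3 → ℝ) : ℝ :=
  ∫ x, ∫ v, f x v ^ (1 + 1 / k) * (max (Lfun x v - L₀) 0) ^ (-(l / k))

/-- The energy–Casimir functional. -/
def HC (k l L₀ M_c : ℝ) (f : E3 → E3 → ℝ) : ℝ := Ekin f + Epot M_c f + Cas k l L₀ f

/-- The constraint set `F_M`. -/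
def FM (k l L₀ M : ℝ) (f : E3 → E3 → ℝ) : Prop :=
  Measurable (Function.uncurry f) ∧ (∀ x v, 0 ≤ f x v) ∧
  (∀ (A : E3 ≃ₗᵢ[ℝ] E3) (x v : E3), f (A x) (A v) = f x v) ∧
  Integrable (Function.uncurry f) ∧ (∫ x, ∫ v, f x v) = M ∧
  Integrable (fun z : E3 × E3 => ‖z.2‖ ^ 2 * f z.1 z.2) ∧
  Integrable (fun z : E3 × E3 =>
    f z.1 z.2 ^ (1 + 1 / k) * (max (Lfun z.1 z.2 - L₀) 0) ^ (-(l / k))) ∧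
  (∀ᵐ z : E3 × E3, Lfun z.1 z.2 < L₀ → f z.1 z.2 = 0)

lemma lfun_le (x v : E3) : Lfun x v ≤ ‖x‖ ^ 2 * ‖v‖ ^ 2 := by
  have : (0:ℝ) ≤ (inner ℝ x v : ℝ)^2 := sq_nonneg _
  simp only [Lfun]; linarith

lemma slice_bound1 {L₀ : ℝ} (hL₀ : 0 < L₀) (x : E3) {g : E3 → ℝ}
    (hg : ∀ v, 0 ≤ g v) (hae : ∀ᵐ v, Lfun x v < L₀ → g v = 0)
    (hgi2 : Integrable (fun v => ‖v‖^2 * g v)) :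
    (∫ v, g v) ≤ ‖x‖^2/L₀ * ∫ v, ‖v‖^2 * g v := by
  have h : (∫ v, g v) ≤ ∫ v, ‖x‖^2/L₀ * (‖v‖^2 * g v) := by
    apply integral_mono_of_nonneg (Filter.Eventually.of_forall hg) (hgi2.const_mul _)
    filter_upwards [hae] with v hv
    rcases eq_or_lt_of_le (hg v) with h0 | h0
    · rw [← h0]; positivity
    · have hL : L₀ ≤ Lfun x v := by
        by_contra hc
        exact absurd (hv (lt_of_not_ge hc)) (by linarith)
      have h2 : L₀ ≤ ‖x‖^2 * ‖v‖^2 := hL.trans (lfun_le x v)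
      have h3 : 1 ≤ ‖x‖^2 * ‖v‖^2 / L₀ := (one_le_div hL₀).mpr h2
      calc g v = 1 * g v := (one_mul _).symm
        _ ≤ ‖x‖^2 * ‖v‖^2 / L₀ * g v := mul_le_mul_of_nonneg_right h3 (hg v)
        _ = ‖x‖^2/L₀ * (‖v‖^2 * g v) := by ring
  rwa [integral_const_mul] at h

lemma slice_bound2 {L₀ : ℝ} (hL₀ : 0 < L₀) (x : E3) {g : E3 → ℝ} {s : ℝ} (hs : 0 < s)
    (hg : ∀ v, 0 ≤ g v) (hae : ∀ᵐ v, Lfun x v < L₀ → g v = 0)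
    (hgi : Integrable g) (hgi2 : Integrable (fun v => ‖v‖^2 * g v)) :
    (1/‖x‖) * ∫ v, g v ≤ 1/(2*Real.sqrt L₀) * (s * (∫ v, g v) + (1/s) * (∫ v, ‖v‖^2 * g v)) := by
  have hsL : 0 < Real.sqrt L₀ := Real.sqrt_pos.mpr hL₀
  have hint : Integrable (fun v => 1/(2*Real.sqrt L₀) * (s * g v + (1/s) * (‖v‖^2 * g v))) :=
    (((hgi.const_mul s).add (hgi2.const_mul (1/s))).const_mul _)
  have h : (∫ v, (1/‖x‖) * g v) ≤ ∫ v, 1/(2*Real.sqrt L₀) * (s * g v + (1/s) * (‖v‖^2 * g v)) := by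
    apply integral_mono_of_nonneg _ hint
    · filter_upwards [hae] with v hv
      rcases eq_or_lt_of_le (hg v) with h0 | h0
      · rw [← h0]; simp
      · have hL : L₀ ≤ Lfun x v := by
          by_contra hc
          exact absurd (hv (lt_of_not_ge hc)) (by linarith)
        have h2 : L₀ ≤ ‖x‖^2 * ‖v‖^2 := hL.trans (lfun_le x v)
        have hsl : Real.sqrt L₀ ≤ ‖x‖ * ‖v‖ := by
          rw [show ‖x‖*‖v‖ = Real.sqrt ((‖x‖*‖v‖)^2) from (Real.sqrt_sq (by positivity)).symm]
          apply Real.sqrt_le_sqrt; nlinarith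
        have hx : 0 < ‖x‖ := by
          rcases eq_or_lt_of_le (norm_nonneg x) with h | h
          · exfalso; rw [← h] at h2; simp at h2; nlinarith
          · exact h
        have key2 : 1/‖x‖ ≤ 1/(2*Real.sqrt L₀) * (s + ‖v‖^2/s) := by
          have expand : 1/(2*Real.sqrt L₀) * (s + ‖v‖^2/s) = (s^2 + ‖v‖^2)/(2*Real.sqrt L₀*s) := by
            field_simp
          rw [expand, div_le_div_iff₀ hx (by positivity)]
          nlinarith [mul_le_mul_of_nonneg_left hsl (by positivity : (0:ℝ) ≤ 2*s),
            mul_le_mul_of_nonneg_left (sq_nonneg (s - ‖v‖)) hx.le]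
        calc (1/‖x‖) * g v ≤ (1/(2*Real.sqrt L₀) * (s + ‖v‖^2/s)) * g v :=
              mul_le_mul_of_nonneg_right key2 (hg v)
          _ = 1/(2*Real.sqrt L₀) * (s * g v + (1/s) * (‖v‖^2 * g v)) := by
              field_simp
    · exact Filter.Eventually.of_forall fun v => by
        have := hg v; positivity
  rw [integral_const_mul] at h
  calc (1/‖x‖) * ∫ v, g v ≤ ∫ v, 1/(2*Real.sqrt L₀) * (s * g v + (1/s) * (‖v‖^2 * g v)) := h
    _ = 1/(2*Real.sqrt L₀) * (s * (∫ v, g v) + (1/s) * (∫ v, ‖v‖^2 * g v)) := by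
        rw [integral_const_mul, integral_add (hgi.const_mul s) (hgi2.const_mul (1/s)),
          integral_const_mul, integral_const_mul]


def hfun : E3 → ℝ := Set.indicator (Metric.closedBall (0:E3) 1)ᶜ (fun y => (‖y‖^4)⁻¹)

lemma hfun_nonneg (y : E3) : 0 ≤ hfun y := by
  unfold hfun
  by_cases h : y ∈ (Metric.closedBall (0:E3) 1)ᶜ
  · rw [Set.indicator_of_mem h]; positivity
  · rw [Set.indicator_of_notMem h]

lemma hfun_integrable : Integrable hfun := by
  have hdim : (Module.finrank ℝ E3 : ℝ) < 4 := by
    rw [finrank_euclideanSpace]; norm_num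
  have hbase : Integrable (fun y : E3 => 16 * (1 + ‖y‖) ^ (-(4:ℝ))) :=
    (integrable_one_add_norm hdim).const_mul 16
  apply Integrable.mono' hbase
  · apply Measurable.aestronglyMeasurable
    exact Measurable.indicator ((measurable_norm.pow measurable_const).inv)
      (measurableSet_closedBall.compl)
  · apply Filter.Eventually.of_forall
    intro y
    rw [Real.norm_of_nonneg (hfun_nonneg y)]
    unfold hfun
    by_cases h : y ∈ (Metric.closedBall (0:E3) 1)ᶜ
    · rw [Set.indicator_of_mem h]
      have hy : 1 < ‖y‖ := by
        simpa [Metric.mem_closedBall, dist_zero_right] using h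
      have hpos : (0:ℝ) < 1 + ‖y‖ := by linarith
      rw [show (-(4:ℝ)) = -(4:ℕ) by norm_num, Real.rpow_neg hpos.le, Real.rpow_natCast]
      rw [inv_eq_one_div, ← div_eq_mul_inv, div_le_div_iff₀ (by positivity) (by positivity)]
      have h2a : (1+‖y‖)^4 ≤ (2*‖y‖)^4 := pow_le_pow_left₀ hpos.le (by linarith) 4
      nlinarith [h2a]
    · rw [Set.indicator_of_notMem h]; positivity

def K₁ : ℝ := ∫ y, hfun y

lemma K₁_nonneg : 0 ≤ K₁ := integral_nonneg hfun_nonneg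

lemma tail_eq (T : ℝ) (hT : 0 < T) :
    (Set.indicator (Metric.closedBall (0:E3) T)ᶜ fun x => (‖x‖^4)⁻¹)
      = fun x => T⁻¹^4 * hfun (T⁻¹ • x) := by
  funext x
  unfold hfun
  have hnorm : ‖T⁻¹ • x‖ = T⁻¹ * ‖x‖ := by
    rw [norm_smul, Real.norm_eq_abs, abs_of_pos (by positivity)]
  by_cases h : x ∈ (Metric.closedBall (0:E3) T)ᶜ
  · have hx : T < ‖x‖ := by simpa [Metric.mem_closedBall, dist_zero_right] using h
    have h2 : T⁻¹ • x ∈ (Metric.closedBall (0:E3) 1)ᶜ := by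
      simp only [Set.mem_compl_iff, Metric.mem_closedBall, dist_zero_right, not_le, hnorm]
      rw [← inv_mul_cancel₀ hT.ne']
      exact mul_lt_mul_of_pos_left hx (by positivity)
    rw [Set.indicator_of_mem h, Set.indicator_of_mem h2, hnorm]
    field_simp
  · have hx : ‖x‖ ≤ T := by simpa [Metric.mem_closedBall, dist_zero_right] using h
    have h2 : T⁻¹ • x ∉ (Metric.closedBall (0:E3) 1)ᶜ := by
      simp only [Set.mem_compl_iff, Metric.mem_closedBall, dist_zero_right, not_le, hnorm, not_lt]
      calc T⁻¹ * ‖x‖ ≤ T⁻¹ * T := by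
            exact mul_le_mul_of_nonneg_left hx (by positivity)
        _ = 1 := inv_mul_cancel₀ hT.ne'
    rw [Set.indicator_of_notMem h, Set.indicator_of_notMem h2, mul_zero]

lemma tail_integrable (T : ℝ) (hT : 0 < T) :
    Integrable (Set.indicator (Metric.closedBall (0:E3) T)ᶜ fun x => (‖x‖^4)⁻¹) := by
  rw [tail_eq T hT]
  apply Integrable.const_mul
  exact (integrable_comp_smul_iff volume hfun (by positivity : T⁻¹ ≠ 0)).mpr hfun_integrable

lemma tail_value (T : ℝ) (hT : 0 < T) :
    ∫ x, (Set.indicator (Metric.closedBall (0:E3) T)ᶜ fun x => (‖x‖^4)⁻¹) x = K₁ / T := by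
  rw [tail_eq T hT]
  simp only
  rw [integral_const_mul, Measure.integral_comp_smul volume hfun T⁻¹]
  rw [finrank_euclideanSpace]
  simp only [Fintype.card_fin, smul_eq_mul]
  rw [abs_of_pos (by positivity)]
  rw [show ((T⁻¹:ℝ)^3)⁻¹ = T^3 by field_simp]
  unfold K₁; field_simp

def V₁ : ℝ := (volume (Metric.ball (0:E3) 1)).toReal

lemma V₁_nonneg : 0 ≤ V₁ := ENNReal.toReal_nonneg

lemma vol_cball (T : ℝ) (hT : 0 ≤ T) :
    (volume (Metric.closedBall (0:E3) T)).toReal = T^3 * V₁ := by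
  rw [Measure.addHaar_closedBall _ _ hT, finrank_euclideanSpace]
  simp only [Fintype.card_fin]
  rw [ENNReal.toReal_mul, ENNReal.toReal_ofReal (by positivity)]
  rfl

lemma iter_eq {g : E3 → E3 → ℝ} (hg : Integrable (fun z : E3 × E3 => g z.1 z.2)) :
    (∫ x, ∫ v, g x v) = ∫ z : E3 × E3, g z.1 z.2 :=
  integral_integral hg

def CC (L₀ M M_c : ℝ) : ℝ :=
  (1/(8*π)) * (L₀ * Real.sqrt M^3 * V₁ + K₁ * Real.sqrt M^3 / L₀)
    + M_c / Real.sqrt L₀ * Real.sqrt M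

def lowB (L₀ M M_c : ℝ) : ℝ := -(1/2) - (CC L₀ M M_c)^2/2


lemma J1_bound (f : E3 → E3 → ℝ) {L₀ M E T : ℝ} (hM : 0 < M) (hE : 0 ≤ E)
    (hT : 0 < T) (hL₀ : 0 < L₀)
    (h1 : ∀ r : ℝ, 0 ≤ mF f r) (h2 : ∀ r : ℝ, mF f r ≤ M)
    (h3 : ∀ r : ℝ, 0 ≤ r → mF f r ≤ r^2/L₀ * E) :
    ∫ x, ‖gradUF f x‖^2 ≤ (E/L₀)^2 * (T^3 * V₁) + M^2 * (K₁/T) := by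
  set φ : E3 → ℝ := fun x => Set.indicator (Metric.closedBall (0:E3) T)
      (fun _ => (E/L₀)^2) x
      + M^2 * (Set.indicator (Metric.closedBall (0:E3) T)ᶜ fun x => (‖x‖^4)⁻¹) x with hφ
  have hφ1_int : Integrable
      (Set.indicator (Metric.closedBall (0:E3) T) (fun _ : E3 => (E/L₀)^2)) := by
    apply IntegrableOn.integrable_indicator _ measurableSet_closedBall
    exact integrableOn_const measure_closedBall_lt_top.ne
  have hφ_int : Integrable φ :=
    hφ1_int.add ((tail_integrable T hT).const_mul _)
  have hφ_val : ∫ x, φ x = (E/L₀)^2 * (T^3 * V₁) + M^2 * (K₁/T) := by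
    rw [hφ, integral_add hφ1_int ((tail_integrable T hT).const_mul _),
      integral_indicator_const _ measurableSet_closedBall, integral_const_mul,
      tail_value T hT, smul_eq_mul, measureReal_def, vol_cball T hT.le]
    ring
  have hφ_nonneg : ∀ x, 0 ≤ φ x := by
    intro x
    apply add_nonneg
    · exact Set.indicator_nonneg (fun _ _ => by positivity) x
    · exact mul_nonneg (by positivity) (Set.indicator_nonneg (fun y _ => by positivity) x)
  have hgrad_le : ∀ x, ‖gradUF f x‖^2 ≤ φ x := by
    intro x
    rcases eq_or_ne x 0 with rfl | hx0
    · simp only [gradUF, norm_zero, smul_zero]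
      simpa using hφ_nonneg 0
    · have hxn : 0 < ‖x‖ := norm_pos_iff.mpr hx0
      have hgr : ‖gradUF f x‖^2 = (mF f ‖x‖)^2 / ‖x‖^4 := by
        rw [gradUF, norm_smul, Real.norm_eq_abs, mul_pow, sq_abs, div_pow]
        field_simp
      rw [hgr]
      by_cases hmem : x ∈ Metric.closedBall (0:E3) T
      · have hxT : ‖x‖ ≤ T := by
          simpa [Metric.mem_closedBall, dist_zero_right] using hmem
        have h2' : (mF f ‖x‖)^2 ≤ (‖x‖^2/L₀ * E)^2 := by
          have ha := h1 ‖x‖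
          have hb := h3 ‖x‖ (norm_nonneg x)
          nlinarith
        have h3' : (mF f ‖x‖)^2 / ‖x‖^4 ≤ (E/L₀)^2 := by
          rw [div_le_iff₀ (by positivity)]
          calc (mF f ‖x‖)^2 ≤ (‖x‖^2/L₀ * E)^2 := h2'
            _ = (E/L₀)^2 * ‖x‖^4 := by field_simp
        refine h3'.trans ?_
        rw [hφ]
        simp only [Set.indicator_of_mem hmem]
        have hn : (0:ℝ) ≤ M^2 * (Set.indicator (Metric.closedBall (0:E3) T)ᶜ
            (fun x => (‖x‖^4)⁻¹) x) :=
          mul_nonneg (by positivity) (Set.indicator_nonneg (fun y _ => by positivity) x)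
        linarith
      · have h2' : (mF f ‖x‖)^2 ≤ M^2 := by
          have ha := h1 ‖x‖
          have hb := h2 ‖x‖
          nlinarith
        have h3' : (mF f ‖x‖)^2 / ‖x‖^4 ≤ M^2 * (‖x‖^4)⁻¹ := by
          rw [div_eq_mul_inv]
          exact mul_le_mul_of_nonneg_right h2' (by positivity)
        refine h3'.trans ?_
        rw [hφ]
        have hmem' : x ∈ (Metric.closedBall (0:E3) T)ᶜ := Set.mem_compl hmem
        simp only [Set.indicator_of_notMem hmem, Set.indicator_of_mem hmem']
        linarith
  calc ∫ x, ‖gradUF f x‖^2 ≤ ∫ x, φ x :=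
        integral_mono_of_nonneg (Filter.Eventually.of_forall fun x => sq_nonneg _)
          hφ_int (Filter.Eventually.of_forall hgrad_le)
    _ = (E/L₀)^2 * (T^3 * V₁) + M^2 * (K₁/T) := hφ_val

lemma assemble_arith (L₀ M M_c E : ℝ) (hL₀ : 0 < L₀) (hM : 0 < M) (hMc : 0 < M_c)
    (hE : 0 ≤ E) :
    lowB L₀ M M_c ≤ E/2
      - (1/(8*π)) * ((E/L₀)^2 * ((L₀ * Real.sqrt M / Real.sqrt (E+1))^3 * V₁)
          + M^2 * (K₁/(L₀ * Real.sqrt M / Real.sqrt (E+1))))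
      - M_c/(2*Real.sqrt L₀) * ((Real.sqrt (E+1)/Real.sqrt M) * M
          + (1/(Real.sqrt (E+1)/Real.sqrt M)) * E) := by
  have hπ : (0:ℝ) < π := Real.pi_pos
  have hV : 0 ≤ V₁ := V₁_nonneg
  have hK : 0 ≤ K₁ := K₁_nonneg
  set u : ℝ := Real.sqrt (E+1) with hu
  have hu0 : 0 < u := Real.sqrt_pos.mpr (by linarith)
  have hu2 : u^2 = E + 1 := Real.sq_sqrt (by linarith)
  have hu1 : 1 ≤ u := by nlinarith
  set m : ℝ := Real.sqrt M with hm
  have hm0 : 0 < m := Real.sqrt_pos.mpr hM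
  have hm2 : m^2 = M := Real.sq_sqrt hM.le
  have hsL : 0 < Real.sqrt L₀ := Real.sqrt_pos.mpr hL₀
  -- term rewrites
  have e1 : (E/L₀)^2 * ((L₀ * m / u)^3 * V₁) = (E^2/u^3) * (L₀ * m^3 * V₁) := by
    field_simp
  have e2 : M^2 * (K₁/(L₀ * m / u)) = (m^4 * u / (L₀ * m)) * K₁ := by
    rw [← hm2]; field_simp
  have e3 : M_c/(2*Real.sqrt L₀) * ((u/m) * M + (1/(u/m)) * E)
      = M_c/(2*Real.sqrt L₀) * (u * m + (E/u) * m) := by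
    rw [← hm2]; field_simp
  have b1 : E^2/u^3 ≤ u := by
    rw [div_le_iff₀ (by positivity)]
    nlinarith
  have b2 : E/u ≤ u := by
    rw [div_le_iff₀ hu0]
    nlinarith
  have b3 : (E^2/u^3) * (L₀ * m^3 * V₁) ≤ u * (L₀ * m^3 * V₁) :=
    mul_le_mul_of_nonneg_right b1 (by positivity)
  have b4 : (m^4 * u / (L₀ * m)) * K₁ = u * (K₁ * m^3 / L₀) := by
    field_simp
  have b5 : M_c/(2*Real.sqrt L₀) * (u * m + (E/u) * m)
      ≤ M_c/(2*Real.sqrt L₀) * (u * m + u * m) := by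
    apply mul_le_mul_of_nonneg_left _ (by positivity)
    have := mul_le_mul_of_nonneg_right b2 hm0.le
    linarith
  have b6 : M_c/(2*Real.sqrt L₀) * (u * m + u * m) = (M_c/Real.sqrt L₀ * m) * u := by
    field_simp; ring
  rw [e1, e2, e3]
  have hCCd : CC L₀ M M_c = (1/(8*π)) * (L₀ * m^3 * V₁ + K₁ * m^3 / L₀)
      + M_c / Real.sqrt L₀ * m := rfl
  have key : E/2 - (1/(8*π)) * ((E^2/u^3) * (L₀ * m^3 * V₁) + (m^4 * u / (L₀ * m)) * K₁)
      - M_c/(2*Real.sqrt L₀) * (u * m + (E/u) * m)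
      ≥ E/2 - CC L₀ M M_c * u := by
    rw [hCCd]
    have h8 : (0:ℝ) < 8*π := by positivity
    have hb : (1/(8*π)) * ((E^2/u^3) * (L₀ * m^3 * V₁) + (m^4 * u / (L₀ * m)) * K₁)
        ≤ (1/(8*π)) * (u * (L₀ * m^3 * V₁) + u * (K₁ * m^3 / L₀)) := by
      apply mul_le_mul_of_nonneg_left _ (by positivity)
      rw [b4]
      linarith
    have hc := b5.trans_eq b6
    have heq : (1/(8*π)) * (u * (L₀ * m^3 * V₁) + u * (K₁ * m^3 / L₀))
        = (1/(8*π)) * (L₀ * m^3 * V₁ + K₁ * m^3 / L₀) * u := by ring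
    linarith [hb, hc]
  refine le_trans ?_ key
  unfold lowB
  set c := CC L₀ M M_c with hcdef
  nlinarith [sq_nonneg (u - c), hu2]

theorem HC_lower (k l L₀ M M_c : ℝ) (hL₀ : 0 < L₀) (hM : 0 < M) (hMc : 0 < M_c)
    (f : E3 → E3 → ℝ) (hf : FM k l L₀ M f) : lowB L₀ M M_c ≤ HC k l L₀ M_c f := by
  obtain ⟨hmeas, hpos, hinv, hint, hmass, hkin, hcas, hsupp⟩ := hf
  have hπ : (0:ℝ) < π := Real.pi_pos
  set E := ∫ z : E3 × E3, ‖z.2‖^2 * f z.1 z.2 with hE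
  have hE0 : 0 ≤ E := integral_nonneg fun z => mul_nonneg (sq_nonneg _) (hpos _ _)
  have hEkin : Ekin f = E/2 := by
    unfold Ekin
    rw [iter_eq hkin]; ring
  have hmass' : (∫ z : E3 × E3, f z.1 z.2) = M := by
    rw [← iter_eq hint]; exact hmass
  have hρ_nonneg : ∀ x, 0 ≤ rhoF f x := fun x => integral_nonneg (hpos x)
  have hρ_int : Integrable (rhoF f) := hint.integral_prod_left
  have hρ_mass : ∫ x, rhoF f x = M := hmass
  set gv : E3 → ℝ := fun x => ∫ v, ‖v‖^2 * f x v with hgv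
  have hgv_int : Integrable gv := hkin.integral_prod_left
  have hgv_nonneg : ∀ x, 0 ≤ gv x :=
    fun x => integral_nonneg fun v => mul_nonneg (sq_nonneg _) (hpos _ _)
  have hgv_mass : ∫ x, gv x = E := iter_eq hkin
  have hae2 : ∀ᵐ x : E3, (∀ᵐ v : E3, Lfun x v < L₀ → f x v = 0) ∧
      Integrable (f x) ∧ Integrable (fun v => ‖v‖^2 * f x v) := by
    have h1 : ∀ᵐ x : E3, ∀ᵐ v : E3, Lfun x v < L₀ → f x v = 0 :=
      Measure.ae_ae_of_ae_prod hsupp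
    have h2 := hint.prod_right_ae
    have h3 := hkin.prod_right_ae
    filter_upwards [h1, h2, h3] with x hx h2x h3x
    exact ⟨hx, h2x, h3x⟩
  -- mF bounds
  have hmF_nonneg : ∀ r : ℝ, 0 ≤ mF f r :=
    fun r => setIntegral_nonneg measurableSet_closedBall (fun x _ => hρ_nonneg x)
  have hmF_le_M : ∀ r : ℝ, mF f r ≤ M :=
    fun r => (setIntegral_le_integral hρ_int
      (Filter.Eventually.of_forall hρ_nonneg)).trans_eq hρ_mass
  have hmF_le_r : ∀ r : ℝ, 0 ≤ r → mF f r ≤ r^2/L₀ * E := by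
    intro r hr
    have step1 : mF f r ≤ ∫ x in Metric.closedBall (0:E3) r, r^2/L₀ * gv x := by
      apply integral_mono_of_nonneg
        (Filter.Eventually.of_forall hρ_nonneg) ((hgv_int.restrict).const_mul _)
      filter_upwards [ae_restrict_of_ae hae2, ae_restrict_mem measurableSet_closedBall]
        with x hx hmem
      have hxr : ‖x‖ ≤ r := by
        simpa [Metric.mem_closedBall, dist_zero_right] using hmem
      have h1 : rhoF f x ≤ ‖x‖^2/L₀ * gv x := slice_bound1 hL₀ x (hpos x) hx.1 hx.2.2
      refine h1.trans ?_
      exact mul_le_mul_of_nonneg_right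
        (by gcongr) (hgv_nonneg x)
    refine step1.trans ?_
    rw [integral_const_mul]
    apply mul_le_mul_of_nonneg_left _ (by positivity)
    exact (setIntegral_le_integral hgv_int
      (Filter.Eventually.of_forall hgv_nonneg)).trans_eq hgv_mass
  -- choose parameters
  have hsq : 0 < Real.sqrt (E+1) := Real.sqrt_pos.mpr (by linarith)
  have hsM : 0 < Real.sqrt M := Real.sqrt_pos.mpr hM
  have hs0 : 0 < Real.sqrt (E+1) / Real.sqrt M := div_pos hsq hsM
  have hT0 : 0 < L₀ * Real.sqrt M / Real.sqrt (E+1) := by positivity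
  -- J2 bound
  have hJ2 : ∫ x, (M_c/‖x‖) * rhoF f x
      ≤ M_c/(2*Real.sqrt L₀) * ((Real.sqrt (E+1)/Real.sqrt M) * M
          + (1/(Real.sqrt (E+1)/Real.sqrt M)) * E) := by
    set s : ℝ := Real.sqrt (E+1) / Real.sqrt M with hsdef
    have hrhs_int : Integrable
        (fun x => M_c/(2*Real.sqrt L₀) * (s * rhoF f x + (1/s) * gv x)) :=
      ((hρ_int.const_mul s).add (hgv_int.const_mul (1/s))).const_mul _
    have h : ∫ x, (M_c/‖x‖) * rhoF f x
        ≤ ∫ x, M_c/(2*Real.sqrt L₀) * (s * rhoF f x + (1/s) * gv x) := by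
      apply integral_mono_of_nonneg
        (Filter.Eventually.of_forall fun x =>
          mul_nonneg (div_nonneg hMc.le (norm_nonneg x)) (hρ_nonneg x)) hrhs_int
      filter_upwards [hae2] with x hx
      have h2 := slice_bound2 hL₀ x hs0 (hpos x) hx.1 hx.2.1 hx.2.2
      calc (M_c/‖x‖) * rhoF f x = M_c * ((1/‖x‖) * ∫ v, f x v) := by
            unfold rhoF; ring
        _ ≤ M_c * (1/(2*Real.sqrt L₀) * (s * (∫ v, f x v) + (1/s) * (∫ v, ‖v‖^2 * f x v))) :=
            mul_le_mul_of_nonneg_left h2 hMc.le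
        _ = M_c/(2*Real.sqrt L₀) * (s * rhoF f x + (1/s) * gv x) := by
            unfold rhoF; rw [hgv]; ring
    refine h.trans_eq ?_
    rw [integral_const_mul, integral_add (hρ_int.const_mul s) (hgv_int.const_mul (1/s)),
      integral_const_mul, integral_const_mul, hρ_mass, hgv_mass]
  have hJ1 := J1_bound f hM hE0 hT0 hL₀ hmF_nonneg hmF_le_M hmF_le_r
  have hfinal := assemble_arith L₀ M M_c E hL₀ hM hMc hE0
  have hCas0 : 0 ≤ Cas k l L₀ f := by
    apply integral_nonneg
    intro x
    apply integral_nonneg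
    intro v
    exact mul_nonneg (Real.rpow_nonneg (hpos x v) _)
      (Real.rpow_nonneg (le_max_right _ _) _)
  have hEpot : Epot M_c f = -(1/(8*π)) * (∫ x, ‖gradUF f x‖^2)
      - ∫ x, (M_c/‖x‖) * rhoF f x := rfl
  have h8 : (0:ℝ) ≤ 1/(8*π) := by positivity
  have hmul := mul_le_mul_of_nonneg_left hJ1 h8
  have hgoal : HC k l L₀ M_c f = Ekin f + Epot M_c f + Cas k l L₀ f := rfl
  rw [hgoal, hEkin, hEpot]
  linarith [hfinal, hmul, hJ2, hCas0]


lemma V₁_pos : 0 < V₁ := by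
  unfold V₁
  rw [ENNReal.toReal_pos_iff]
  exact ⟨Metric.measure_ball_pos volume 0 one_pos, measure_ball_lt_top⟩

theorem construction (k l L₀ M M_c R W : ℝ) (hk : 0 < k) (hkl : k ≤ l)
    (hL₀ : 0 < L₀) (hM : 0 < M) (hMc : 0 < M_c) (hR : 0 < R) (hW : 0 < W)
    (hcL : 20 * L₀ ≤ (R*W)^2) :
    ∃ f, FM k l L₀ M f ∧ HC k l L₀ M_c f
      ≤ (1/2)*W^2*M
        + ((M*8^6/V₁^2)^(1/k) * 20^(l/k) * (R*W)^(-((2*l+3)/k)))*M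
        - M_c/R*M := by
  set c : ℝ := (R*W)^2/10 with hc
  have hc0 : 0 < c := by positivity
  have hcL2 : 2*L₀ ≤ c := by rw [hc]; linarith
  set A : Set (E3 × E3) :=
    {z | ‖z.1‖ ≤ R ∧ ‖z.2‖ ≤ W ∧ c ≤ Lfun z.1 z.2} with hA
  have hLc : Continuous (fun z : E3 × E3 => Lfun z.1 z.2) := by
    unfold Lfun
    exact ((continuous_fst.norm.pow 2).mul (continuous_snd.norm.pow 2)).sub
      ((Continuous.inner continuous_fst continuous_snd).pow 2)
  have hAclosed : IsClosed A := by
    rw [hA]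
    have e : {z : E3 × E3 | ‖z.1‖ ≤ R ∧ ‖z.2‖ ≤ W ∧ c ≤ Lfun z.1 z.2}
        = {z : E3 × E3 | ‖z.1‖ ≤ R} ∩ ({z | ‖z.2‖ ≤ W} ∩ {z | c ≤ Lfun z.1 z.2}) := by
      ext z; simp [Set.mem_inter_iff, and_assoc]
    rw [e]
    exact (isClosed_le continuous_fst.norm continuous_const).inter
      ((isClosed_le continuous_snd.norm continuous_const).inter
        (isClosed_le continuous_const hLc))
  have hAmeas : MeasurableSet A := hAclosed.measurableSet
  have hAsub : A ⊆ (Metric.closedBall (0:E3) R) ×ˢ (Metric.closedBall (0:E3) W) := by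
    rintro ⟨x, v⟩ ⟨h1, h2, h3⟩
    exact ⟨by simpa [Metric.mem_closedBall, dist_zero_right] using h1,
           by simpa [Metric.mem_closedBall, dist_zero_right] using h2⟩
  have hAfin : volume A < ⊤ := by
    apply lt_of_le_of_lt (measure_mono hAsub)
    rw [MeasureTheory.Measure.volume_eq_prod, Measure.prod_prod]
    exact ENNReal.mul_lt_top measure_closedBall_lt_top measure_closedBall_lt_top
  -- lower bound on volume: product of balls
  set x₀ : E3 := EuclideanSpace.single (0 : Fin 3) ((3/4)*R) with hx₀
  set v₀ : E3 := EuclideanSpace.single (1 : Fin 3) ((3/4)*W) with hv₀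
  have hnx₀ : ‖x₀‖ = 3/4*R := by
    rw [hx₀, EuclideanSpace.norm_single, Real.norm_eq_abs, abs_of_pos (by positivity)]
  have hnv₀ : ‖v₀‖ = 3/4*W := by
    rw [hv₀, EuclideanSpace.norm_single, Real.norm_eq_abs, abs_of_pos (by positivity)]
  have hinner₀ : (inner ℝ x₀ v₀ : ℝ) = 0 := by
    rw [hx₀, hv₀, EuclideanSpace.inner_single_left, EuclideanSpace.single_apply]
    norm_num
  have hsubset : (Metric.ball x₀ (R/8)) ×ˢ (Metric.ball v₀ (W/8)) ⊆ A := by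
    rintro ⟨x, v⟩ ⟨hx, hv⟩
    simp only [Metric.mem_ball, dist_eq_norm] at hx hv
    have hdx : ‖x - x₀‖ ≤ R/8 := hx.le
    have hdv : ‖v - v₀‖ ≤ W/8 := hv.le
    have hxu : ‖x‖ ≤ 7/8*R := by
      have := norm_add_le x₀ (x - x₀)
      rw [add_sub_cancel] at this
      rw [hnx₀] at this; linarith
    have hvu : ‖v‖ ≤ 7/8*W := by
      have := norm_add_le v₀ (v - v₀)
      rw [add_sub_cancel] at this
      rw [hnv₀] at this; linarith
    have hxl : 5/8*R ≤ ‖x‖ := by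
      have h := abs_norm_sub_norm_le x x₀
      rw [hnx₀] at h
      have := abs_le.mp h
      linarith
    have hvl : 5/8*W ≤ ‖v‖ := by
      have h := abs_norm_sub_norm_le v v₀
      rw [hnv₀] at h
      have := abs_le.mp h
      linarith
    have hinn : |(inner ℝ x v : ℝ)| ≤ 13/64*(R*W) := by
      have hxe : x = x₀ + (x - x₀) := by abel
      have hve : v = v₀ + (v - v₀) := by abel
      have hexp : (inner ℝ x v : ℝ) = inner ℝ x₀ v₀ + inner ℝ x₀ (v - v₀)
          + inner ℝ (x - x₀) v₀ + inner ℝ (x - x₀) (v - v₀) := by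
        conv_lhs => rw [hxe, hve]
        rw [inner_add_left, inner_add_right, inner_add_right]
        ring
      rw [hexp, hinner₀, zero_add]
      have h1 : |(inner ℝ x₀ (v - v₀) : ℝ)| ≤ (3/4*R)*(W/8) := by
        refine (abs_real_inner_le_norm _ _).trans ?_
        rw [hnx₀]
        exact mul_le_mul_of_nonneg_left hdv (by positivity)
      have h2 : |(inner ℝ (x - x₀) v₀ : ℝ)| ≤ (R/8)*(3/4*W) := by
        refine (abs_real_inner_le_norm _ _).trans ?_
        rw [hnv₀]
        exact mul_le_mul_of_nonneg_right hdx (by positivity)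
      have h3 : |(inner ℝ (x - x₀) (v - v₀) : ℝ)| ≤ (R/8)*(W/8) := by
        refine (abs_real_inner_le_norm _ _).trans ?_
        exact mul_le_mul hdx hdv (norm_nonneg _) (by positivity)
      calc |(inner ℝ x₀ (v - v₀) : ℝ) + inner ℝ (x - x₀) v₀ + inner ℝ (x - x₀) (v - v₀)|
          ≤ |(inner ℝ x₀ (v - v₀) : ℝ)| + |(inner ℝ (x - x₀) v₀ : ℝ)|
            + |(inner ℝ (x - x₀) (v - v₀) : ℝ)| := by
            exact (abs_add_le _ _).trans (by gcongr; exact abs_add_le _ _)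
        _ ≤ (3/4*R)*(W/8) + (R/8)*(3/4*W) + (R/8)*(W/8) := by gcongr
        _ ≤ 13/64*(R*W) := by nlinarith
    refine ⟨by linarith, by linarith, ?_⟩
    have hLf : Lfun x v = ‖x‖^2*‖v‖^2 - (inner ℝ x v : ℝ)^2 := rfl
    rw [hLf, hc]
    have hinn2 : (inner ℝ x v : ℝ)^2 ≤ (13/64*(R*W))^2 := by
      rw [← sq_abs]
      exact pow_le_pow_left₀ (abs_nonneg _) hinn 2
    have hx2 : (5/8*R)^2 ≤ ‖x‖^2 := pow_le_pow_left₀ (by positivity) hxl 2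
    have hv2 : (5/8*W)^2 ≤ ‖v‖^2 := pow_le_pow_left₀ (by positivity) hvl 2
    have hprod : (5/8*R)^2*(5/8*W)^2 ≤ ‖x‖^2*‖v‖^2 :=
      mul_le_mul hx2 hv2 (by positivity) (sq_nonneg _)
    nlinarith
  set Ilow : ℝ := (R/8)^3 * (W/8)^3 * V₁^2 with hIlow
  have hIlow0 : 0 < Ilow := by have := V₁_pos; positivity
  set I : ℝ := (volume A).toReal with hI
  have hIl : Ilow ≤ I := by
    have hm : volume ((Metric.ball x₀ (R/8)) ×ˢ (Metric.ball v₀ (W/8))) ≤ volume A :=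
      measure_mono hsubset
    rw [MeasureTheory.Measure.volume_eq_prod, Measure.prod_prod] at hm
    have hvx : volume (Metric.ball x₀ (R/8)) = ENNReal.ofReal ((R/8)^3) * volume (Metric.ball (0:E3) 1) := by
      rw [Measure.addHaar_ball _ _ (by positivity : (0:ℝ) ≤ R/8), finrank_euclideanSpace]
      simp
    have hvv : volume (Metric.ball v₀ (W/8)) = ENNReal.ofReal ((W/8)^3) * volume (Metric.ball (0:E3) 1) := by
      rw [Measure.addHaar_ball _ _ (by positivity : (0:ℝ) ≤ W/8), finrank_euclideanSpace]
      simp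
    have := ENNReal.toReal_mono (ne_of_lt hAfin) hm
    rw [ENNReal.toReal_mul, hvx, hvv, ENNReal.toReal_mul, ENNReal.toReal_mul,
      ENNReal.toReal_ofReal (by positivity), ENNReal.toReal_ofReal (by positivity)] at this
    rw [hIlow, hI]
    calc (R/8)^3 * (W/8)^3 * V₁^2
        = (R/8)^3 * V₁ * ((W/8)^3 * V₁) := by unfold V₁; ring
      _ ≤ (volume A).toReal := this
  have hI0 : 0 < I := lt_of_lt_of_le hIlow0 hIl
  set α : ℝ := M / I with hα
  have hα0 : 0 < α := div_pos hM hI0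
  set f₀ : E3 → E3 → ℝ := fun x v => α * Set.indicator A (fun _ => (1:ℝ)) (x, v) with hf₀
  have hf₀z : ∀ z : E3 × E3, f₀ z.1 z.2 = α * Set.indicator A (fun _ => (1:ℝ)) z :=
    fun z => rfl
  have hα0' : 0 ≤ α := hα0.le
  have hind_int : Integrable (Set.indicator A (fun _ : E3 × E3 => (1:ℝ))) :=
    IntegrableOn.integrable_indicator
      (integrableOn_const hAfin.ne) hAmeas
  have hind_nonneg : ∀ z, 0 ≤ Set.indicator A (fun _ : E3 × E3 => (1:ℝ)) z :=
    fun z => Set.indicator_nonneg (fun _ _ => zero_le_one) z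
  have hind_le_one : ∀ z, Set.indicator A (fun _ : E3 × E3 => (1:ℝ)) z ≤ 1 := by
    intro z
    by_cases h : z ∈ A
    · rw [Set.indicator_of_mem h]
    · rw [Set.indicator_of_notMem h]; norm_num
  have hf₀_int : Integrable (fun z : E3 × E3 => f₀ z.1 z.2) := hind_int.const_mul α
  have hind_val : (∫ z : E3 × E3, Set.indicator A (fun _ => (1:ℝ)) z) = I := by
    rw [integral_indicator_const _ hAmeas, smul_eq_mul, mul_one, hI, measureReal_def]
  have hmassz : (∫ z : E3 × E3, f₀ z.1 z.2) = M := by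
    have : (∫ z : E3 × E3, f₀ z.1 z.2)
        = ∫ z : E3 × E3, α * Set.indicator A (fun _ => (1:ℝ)) z := rfl
    rw [this, integral_const_mul, hind_val, hα]
    field_simp
  have hmass₀ : (∫ x, ∫ v, f₀ x v) = M := by
    rw [iter_eq hf₀_int]; exact hmassz
  -- measurability
  have hind_meas : Measurable (Set.indicator A (fun _ : E3 × E3 => (1:ℝ))) :=
    measurable_const.indicator hAmeas
  have hmeas₀ : Measurable (Function.uncurry f₀) := hind_meas.const_mul α
  -- nonneg
  have hpos₀ : ∀ x v, 0 ≤ f₀ x v := fun x v => mul_nonneg hα0' (hind_nonneg (x, v))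
  -- invariance
  have hinv₀ : ∀ (T : E3 ≃ₗᵢ[ℝ] E3) (x v : E3), f₀ (T x) (T v) = f₀ x v := by
    intro T x v
    have hmemiff : ((T x, T v) ∈ A) ↔ ((x, v) ∈ A) := by
      simp only [hA, Set.mem_setOf_eq, T.norm_map]
      have : Lfun (T x) (T v) = Lfun x v := by
        unfold Lfun
        rw [T.norm_map, T.norm_map, T.inner_map_map]
      rw [this]
    show α * _ = α * _
    by_cases h : (x, v) ∈ A
    · rw [Set.indicator_of_mem h, Set.indicator_of_mem (hmemiff.mpr h)]
    · rw [Set.indicator_of_notMem h, Set.indicator_of_notMem (fun hc => h (hmemiff.mp hc))]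
  -- kinetic integrability
  have hkin₀ : Integrable (fun z : E3 × E3 => ‖z.2‖^2 * f₀ z.1 z.2) := by
    apply Integrable.mono' (hind_int.const_mul (W^2 * α))
    · exact ((measurable_snd.norm.pow measurable_const).mul hmeas₀).aestronglyMeasurable
    · apply Filter.Eventually.of_forall
      intro z
      rw [Real.norm_of_nonneg (mul_nonneg (sq_nonneg _) (hpos₀ z.1 z.2))]
      by_cases h : z ∈ A
      · have hW2 : ‖z.2‖^2 ≤ W^2 := pow_le_pow_left₀ (norm_nonneg _) h.2.1 2
        have : f₀ z.1 z.2 = α := by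
          show α * _ = α
          rw [Set.indicator_of_mem h, mul_one]
        rw [this, Set.indicator_of_mem h, mul_one]
        exact mul_le_mul_of_nonneg_right hW2 hα0'
      · have : f₀ z.1 z.2 = 0 := by
          show α * _ = 0
          rw [Set.indicator_of_notMem h, mul_zero]
        rw [this, Set.indicator_of_notMem h]
        simp
  -- Casimir integrand facts
  have hexp_pos : 0 < 1 + 1/k := by positivity
  have hlk : 0 ≤ l/k := div_nonneg (hk.le.trans hkl) hk.le
  set D : ℝ := α ^ (1 + 1/k) * (c/2) ^ (-(l/k)) with hD
  have hD0 : 0 ≤ D := mul_nonneg (Real.rpow_nonneg hα0' _) (Real.rpow_nonneg (by positivity) _)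
  have hcasz : ∀ z : E3 × E3,
      f₀ z.1 z.2 ^ (1 + 1/k) * (max (Lfun z.1 z.2 - L₀) 0) ^ (-(l/k))
        ≤ D * Set.indicator A (fun _ => (1:ℝ)) z ∧
      0 ≤ f₀ z.1 z.2 ^ (1 + 1/k) * (max (Lfun z.1 z.2 - L₀) 0) ^ (-(l/k)) := by
    intro z
    constructor
    · by_cases h : z ∈ A
      · have hfa : f₀ z.1 z.2 = α := by
          show α * _ = α
          rw [Set.indicator_of_mem h, mul_one]
        have hLge : c/2 ≤ Lfun z.1 z.2 - L₀ := by
          have := h.2.2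
          linarith
        have hmax : max (Lfun z.1 z.2 - L₀) 0 = Lfun z.1 z.2 - L₀ :=
          max_eq_left (by linarith [hc0])
        rw [hfa, hmax, Set.indicator_of_mem h, mul_one, hD]
        apply mul_le_mul_of_nonneg_left _ (Real.rpow_nonneg hα0' _)
        exact Real.rpow_le_rpow_of_nonpos (by positivity) hLge (by linarith [hlk])
      · have hfa : f₀ z.1 z.2 = 0 := by
          show α * _ = 0
          rw [Set.indicator_of_notMem h, mul_zero]
        rw [hfa, Real.zero_rpow (ne_of_gt hexp_pos), zero_mul,
          Set.indicator_of_notMem h, mul_zero]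
    · exact mul_nonneg (Real.rpow_nonneg (hpos₀ z.1 z.2) _)
        (Real.rpow_nonneg (le_max_right _ _) _)
  have hcas₀ : Integrable (fun z : E3 × E3 =>
      f₀ z.1 z.2 ^ (1 + 1/k) * (max (Lfun z.1 z.2 - L₀) 0) ^ (-(l/k))) := by
    apply Integrable.mono' (hind_int.const_mul D)
    · apply Measurable.aestronglyMeasurable
      fun_prop
    · apply Filter.Eventually.of_forall
      intro z
      rw [Real.norm_of_nonneg (hcasz z).2]
      exact (hcasz z).1
  -- support
  have hsupp₀ : ∀ᵐ z : E3 × E3, Lfun z.1 z.2 < L₀ → f₀ z.1 z.2 = 0 := by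
    apply Filter.Eventually.of_forall
    intro z hz
    show α * _ = 0
    rw [Set.indicator_of_notMem, mul_zero]
    intro hmem
    have := hmem.2.2
    linarith
  have hFM : FM k l L₀ M f₀ :=
    ⟨hmeas₀, hpos₀, hinv₀, hf₀_int, hmass₀, hkin₀, hcas₀, hsupp₀⟩
  refine ⟨f₀, hFM, ?_⟩
  -- kinetic bound
  have hEk : Ekin f₀ ≤ (1/2)*W^2*M := by
    unfold Ekin
    rw [iter_eq hkin₀]
    have hb : (∫ z : E3 × E3, ‖z.2‖^2 * f₀ z.1 z.2) ≤ ∫ z : E3 × E3, W^2 * f₀ z.1 z.2 := by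
      apply integral_mono hkin₀ (hf₀_int.const_mul _)
      intro z
      show ‖z.2‖^2 * f₀ z.1 z.2 ≤ W^2 * f₀ z.1 z.2
      by_cases h : z ∈ A
      · have hW2 : ‖z.2‖^2 ≤ W^2 := pow_le_pow_left₀ (norm_nonneg _) h.2.1 2
        exact mul_le_mul_of_nonneg_right hW2 (hpos₀ z.1 z.2)
      · have : f₀ z.1 z.2 = 0 := by
          show α * _ = 0
          rw [Set.indicator_of_notMem h, mul_zero]
        rw [this, mul_zero, mul_zero]
      -- end cases
    have hval : (∫ z : E3 × E3, W^2 * f₀ z.1 z.2) = W^2 * M := by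
      rw [integral_const_mul, hmassz]
    nlinarith [hb.trans_eq hval]
  -- Casimir bound
  have hCasb : Cas k l L₀ f₀ ≤ (M/Ilow)^(1/k) * (c/2)^(-(l/k)) * M := by
    unfold Cas
    rw [iter_eq hcas₀]
    have hb : (∫ z : E3 × E3,
        f₀ z.1 z.2 ^ (1 + 1/k) * (max (Lfun z.1 z.2 - L₀) 0) ^ (-(l/k)))
          ≤ ∫ z : E3 × E3, D * Set.indicator A (fun _ => (1:ℝ)) z := by
      apply integral_mono hcas₀ (hind_int.const_mul D)
      intro z
      exact (hcasz z).1
    have hval : (∫ z : E3 × E3, D * Set.indicator A (fun _ => (1:ℝ)) z) = D * I := by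
      rw [integral_const_mul, hind_val]
    have hDI : D * I = α^(1/k) * (c/2)^(-(l/k)) * M := by
      rw [hD, show (1 + 1/k : ℝ) = 1/k + 1 by ring, Real.rpow_add hα0, Real.rpow_one, hα]
      field_simp
    have hαb : α^(1/k) ≤ (M/Ilow)^(1/k) := by
      apply Real.rpow_le_rpow hα0' _ (by positivity)
      rw [hα]
      gcongr
    calc (∫ z : E3 × E3,
        f₀ z.1 z.2 ^ (1 + 1/k) * (max (Lfun z.1 z.2 - L₀) 0) ^ (-(l/k)))
        ≤ D * I := hb.trans_eq hval
      _ = α^(1/k) * (c/2)^(-(l/k)) * M := hDI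
      _ ≤ (M/Ilow)^(1/k) * (c/2)^(-(l/k)) * M := by
          apply mul_le_mul_of_nonneg_right _ hM.le
          exact mul_le_mul_of_nonneg_right hαb (Real.rpow_nonneg (by positivity) _)
  -- potential bound
  have hEp : Epot M_c f₀ ≤ -(M_c/R*M) := by
    have hρ₀_nonneg : ∀ x, 0 ≤ rhoF f₀ x := fun x => integral_nonneg (hpos₀ x)
    have hρ₀_int : Integrable (rhoF f₀) := hf₀_int.integral_prod_left
    have hρ₀_mass : (∫ x, rhoF f₀ x) = M := hmass₀
    have hsec : ∀ x : E3, (∃ v, (x,v) ∈ A) ∨ rhoF f₀ x = 0 := by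
      intro x
      by_cases h : ∃ v, (x,v) ∈ A
      · exact Or.inl h
      · right
        unfold rhoF
        have hz : ∀ v, f₀ x v = 0 := fun v => by
          show α * _ = 0
          rw [Set.indicator_of_notMem (fun hm => h ⟨v, hm⟩), mul_zero]
        simp [hz]
    have hsqc : 0 < Real.sqrt c := Real.sqrt_pos.mpr hc0
    have hxprop : ∀ x : E3, (∃ v, (x,v) ∈ A) →
        0 < ‖x‖ ∧ ‖x‖ ≤ R ∧ Real.sqrt c / W ≤ ‖x‖ := by
      rintro x ⟨v, h1, h2, h3⟩
      have hle : c ≤ ‖x‖^2*W^2 := by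
        have hl := lfun_le x v
        have hv2 : ‖v‖^2 ≤ W^2 := pow_le_pow_left₀ (norm_nonneg v) h2 2
        have hm := mul_le_mul_of_nonneg_left hv2 (sq_nonneg ‖x‖)
        linarith
      have hx0 : 0 < ‖x‖ := by
        rcases eq_or_lt_of_le (norm_nonneg x) with h | h
        · exfalso
          rw [← h] at hle
          simp at hle
          nlinarith
        · exact h
      refine ⟨hx0, h1, ?_⟩
      rw [div_le_iff₀ hW]
      have hsq : Real.sqrt c ≤ Real.sqrt (‖x‖^2*W^2) := Real.sqrt_le_sqrt hle
      rwa [show ‖x‖^2*W^2 = (‖x‖*W)^2 by ring, Real.sqrt_sq (by positivity)] at hsq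
    have hJ1₀ : 0 ≤ ∫ x, ‖gradUF f₀ x‖^2 := integral_nonneg fun x => sq_nonneg _
    have hlow : ∀ x, (M_c/R) * rhoF f₀ x ≤ (M_c/‖x‖) * rhoF f₀ x := by
      intro x
      rcases hsec x with h | h
      · obtain ⟨hx0, hxR, _⟩ := hxprop x h
        exact mul_le_mul_of_nonneg_right (by gcongr) (hρ₀_nonneg x)
      · rw [h, mul_zero, mul_zero]
    have hup : ∀ x, (M_c/‖x‖) * rhoF f₀ x ≤ (M_c*W/Real.sqrt c) * rhoF f₀ x := by
      intro x
      rcases hsec x with h | h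
      · obtain ⟨hx0, _, hxm⟩ := hxprop x h
        apply mul_le_mul_of_nonneg_right _ (hρ₀_nonneg x)
        rw [div_le_div_iff₀ hx0 hsqc]
        have : Real.sqrt c ≤ W * ‖x‖ := by
          rw [div_le_iff₀ hW] at hxm
          linarith [hxm]
        calc M_c * Real.sqrt c ≤ M_c * (W * ‖x‖) :=
              mul_le_mul_of_nonneg_left this hMc.le
          _ = M_c * W * ‖x‖ := by ring
      · rw [h, mul_zero, mul_zero]
    have hJ₂int : Integrable (fun x => (M_c/‖x‖) * rhoF f₀ x) := by
      apply Integrable.mono' (hρ₀_int.const_mul (M_c*W/Real.sqrt c))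
      · exact ((measurable_const.div measurable_norm).aestronglyMeasurable.mul
          hρ₀_int.aestronglyMeasurable)
      · apply Filter.Eventually.of_forall
        intro x
        rw [Real.norm_of_nonneg (mul_nonneg (div_nonneg hMc.le (norm_nonneg x)) (hρ₀_nonneg x))]
        exact hup x
    have hJ₂low : M_c/R*M ≤ ∫ x, (M_c/‖x‖) * rhoF f₀ x := by
      have hmono := integral_mono_of_nonneg
        (Filter.Eventually.of_forall fun x =>
          mul_nonneg (div_nonneg hMc.le hR.le) (hρ₀_nonneg x))
        hJ₂int (Filter.Eventually.of_forall hlow)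
      rw [integral_const_mul, hρ₀_mass] at hmono
      exact hmono
    have hEpd : Epot M_c f₀ = -(1/(8*π)) * (∫ x, ‖gradUF f₀ x‖^2)
        - ∫ x, (M_c/‖x‖) * rhoF f₀ x := rfl
    rw [hEpd]
    have h8 : 0 ≤ (1/(8*π)) * ∫ x, ‖gradUF f₀ x‖^2 :=
      mul_nonneg (by positivity) hJ1₀
    linarith

  -- algebra: rewrite target constant
  have halg : (M/Ilow)^(1/k) * (c/2)^(-(l/k))
      ≤ (M*8^6/V₁^2)^(1/k) * 20^(l/k) * (R*W)^(-((2*l+3)/k)) := by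
    have hRW : 0 < R*W := by positivity
    have hV := V₁_pos
    have hpow3 : (R*W) ^ (-(3:ℝ)) = ((R*W)^(3:ℕ))⁻¹ := by
      rw [← Real.rpow_natCast (R*W) 3, ← Real.rpow_neg hRW.le]
      norm_num
    have e1 : M/Ilow = (M*8^6/V₁^2) * ((R*W) ^ (-(3:ℝ))) := by
      rw [hIlow, hpow3]
      field_simp
    have h2 : (M/Ilow)^(1/k) = (M*8^6/V₁^2)^(1/k) * (R*W)^(-(3:ℝ)*(1/k)) := by
      rw [e1, Real.mul_rpow (by positivity) (Real.rpow_nonneg hRW.le _),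
        ← Real.rpow_mul hRW.le]
    have h3 : (c/2)^(-(l/k)) = 20^(l/k) * (R*W)^((2:ℝ)*(-(l/k))) := by
      have hc2 : c/2 = (R*W)^(2:ℕ)/20 := by rw [hc]; ring
      rw [hc2, Real.div_rpow (by positivity) (by norm_num),
        ← Real.rpow_natCast (R*W) 2, ← Real.rpow_mul hRW.le,
        Real.rpow_neg (by norm_num : (0:ℝ) ≤ 20), div_eq_mul_inv, inv_inv]
      push_cast
      ring
    refine le_of_eq ?_
    calc (M/Ilow)^(1/k) * (c/2)^(-(l/k))
        = (M*8^6/V₁^2)^(1/k) * 20^(l/k)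
            * ((R*W)^(-(3:ℝ)*(1/k)) * (R*W)^((2:ℝ)*(-(l/k)))) := by
          rw [h2, h3]; ring
      _ = (M*8^6/V₁^2)^(1/k) * 20^(l/k) * (R*W)^(-(3:ℝ)*(1/k) + (2:ℝ)*(-(l/k))) := by
          rw [← Real.rpow_add hRW]
      _ = (M*8^6/V₁^2)^(1/k) * 20^(l/k) * (R*W)^(-((2*l+3)/k)) := by
          rw [show (-(3:ℝ)*(1/k) + (2:ℝ)*(-(l/k))) = -((2*l+3)/k) by ring]

  have hHC : HC k l L₀ M_c f₀ = Ekin f₀ + Epot M_c f₀ + Cas k l L₀ f₀ := rfl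
  rw [hHC]
  have h2 : (M/Ilow)^(1/k) * (c/2)^(-(l/k)) * M
      ≤ (M*8^6/V₁^2)^(1/k) * 20^(l/k) * (R*W)^(-((2*l+3)/k)) * M :=
    mul_le_mul_of_nonneg_right halg hM.le
  linarith [hEk, hCasb, hEp, h2]


theorem exists_neg (k l L₀ M M_c : ℝ) (hk : 0 < k) (hkl : k ≤ l)
    (hL₀ : 0 < L₀) (hM : 0 < M) (hMc : 0 < M_c) :
    ∃ f, FM k l L₀ M f ∧ HC k l L₀ M_c f < 0 := by
  have h2l3 : (0:ℝ) < 2*l+3 := by linarith [hk.trans_le hkl]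
  set η : ℝ := 3/2 - k/(2*l+3) with hηdef
  have hη1 : 1 < η := by
    have : k/(2*l+3) < 1/2 := by
      rw [div_lt_iff₀ h2l3]; linarith [hk.trans_le hkl]
    rw [hηdef]; linarith
  have hη2 : η < 2 := by
    have : 0 < k/(2*l+3) := by positivity
    rw [hηdef]; linarith
  set γ : ℝ := (1 - η/2)*((2*l+3)/k) with hγdef
  have hγe : γ = (2*l+3)/(4*k) + 1/2 := by
    rw [hγdef, hηdef]
    field_simp
    ring
  have hγ1 : 1 < γ := by
    rw [hγe]
    have : 1/2 < (2*l+3)/(4*k) := by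
      rw [div_lt_div_iff₀ (by norm_num) (by positivity)]
      linarith [hk.trans_le hkl]
    linarith
  set C₇ : ℝ := (M*8^6/V₁^2)^(1/k) * 20^(l/k) with hC₇
  have hC₇0 : 0 ≤ C₇ := mul_nonneg (Real.rpow_nonneg (by have := V₁_pos; positivity) _)
    (Real.rpow_nonneg (by norm_num) _)
  -- eventual conditions
  have hp0 : ∀ p : ℝ, 0 < p →
      Filter.Tendsto (fun b : ℝ => b^p) (nhdsWithin 0 (Set.Ioi 0)) (nhds 0) := by
    intro p hp
    have hcont := (Real.continuousAt_rpow_const 0 p (Or.inr hp.le)).tendsto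
    rw [Real.zero_rpow hp.ne'] at hcont
    exact hcont.mono_left nhdsWithin_le_nhds
  have hsum_t : Filter.Tendsto (fun b : ℝ => (1/2)*b^(η-1) + C₇*b^(γ-1))
      (nhdsWithin 0 (Set.Ioi 0)) (nhds 0) := by
    have := ((hp0 (η-1) (by linarith)).const_mul (1/2)).add
      ((hp0 (γ-1) (by linarith)).const_mul C₇)
    simpa using this
  have hev1 : ∀ᶠ b in nhdsWithin (0:ℝ) (Set.Ioi 0),
      (1/2)*b^(η-1) + C₇*b^(γ-1) < M_c :=
    hsum_t.eventually_lt_const hMc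
  have hgeo_t : Filter.Tendsto (fun b : ℝ => (b⁻¹ * b^(η/2))^2)
      (nhdsWithin 0 (Set.Ioi 0)) Filter.atTop := by
    have hbase : Filter.Tendsto (fun b : ℝ => (b⁻¹)^(2-η))
        (nhdsWithin 0 (Set.Ioi 0)) Filter.atTop :=
      (tendsto_rpow_atTop (by linarith : (0:ℝ) < 2-η)).comp tendsto_inv_nhdsGT_zero
    apply hbase.congr'
    filter_upwards [self_mem_nhdsWithin] with b hb
    have hb0 : (0:ℝ) < b := hb
    have e1 : b⁻¹ * b^(η/2) = b^(η/2 - 1) := by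
      rw [← Real.rpow_neg_one b, ← Real.rpow_add hb0]
      congr 1; ring
    rw [e1, Real.inv_rpow hb0.le, ← Real.rpow_neg hb0.le,
      ← Real.rpow_natCast (b ^ (η/2-1)) 2, ← Real.rpow_mul hb0.le]
    congr 1
    push_cast
    ring
  have hev2 : ∀ᶠ b in nhdsWithin (0:ℝ) (Set.Ioi 0),
      20*L₀ ≤ (b⁻¹ * b^(η/2))^2 := hgeo_t.eventually_ge_atTop _
  have hev0 : ∀ᶠ b in nhdsWithin (0:ℝ) (Set.Ioi 0), 0 < b :=
    eventually_mem_nhdsWithin.mono (fun b hb => hb)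
  obtain ⟨b, hb0, hsum, hgeo⟩ := (hev0.and (hev1.and hev2)).exists
  have hW0 : 0 < b^(η/2) := Real.rpow_pos_of_pos hb0 _
  obtain ⟨f, hFM, hHC⟩ := construction k l L₀ M M_c (b⁻¹) (b^(η/2)) hk hkl hL₀ hM hMc
    (by positivity) hW0 hgeo
  refine ⟨f, hFM, lt_of_le_of_lt hHC ?_⟩
  -- show the bound is negative
  have e1 : (b^(η/2))^2 = b^η := by
    rw [← Real.rpow_natCast (b^(η/2)) 2, ← Real.rpow_mul hb0.le]
    norm_num
  have e2 : M_c/b⁻¹ = M_c*b := by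
    field_simp
  have e3 : (b⁻¹ * b^(η/2))^(-((2*l+3)/k)) = b^γ := by
    have ebase : b⁻¹ * b^(η/2) = b^(η/2 - 1) := by
      rw [← Real.rpow_neg_one b, ← Real.rpow_add hb0]
      congr 1; ring
    rw [ebase, ← Real.rpow_mul hb0.le]
    congr 1
    rw [hγdef]; ring
  rw [e1, e2, e3]
  have e4 : b^(η-1)*b = b^η := by
    have h := Real.rpow_add hb0 (η-1) 1
    rw [Real.rpow_one, show η-1+1 = η by ring] at h
    exact h.symm
  have e5 : b^(γ-1)*b = b^γ := by
    have h := Real.rpow_add hb0 (γ-1) 1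
    rw [Real.rpow_one, show γ-1+1 = γ by ring] at h
    exact h.symm
  have hmul := mul_lt_mul_of_pos_right hsum (show (0:ℝ) < b*M by positivity)
  calc (1/2)*b^η*M + C₇*b^γ*M - M_c*b*M
      = ((1/2)*b^(η-1) + C₇*b^(γ-1))*(b*M) - M_c*(b*M) := by
        rw [show ((1/2)*b^(η-1) + C₇*b^(γ-1))*(b*M)
          = (1/2)*(b^(η-1)*b)*M + C₇*(b^(γ-1)*b)*M by ring, e4, e5]
        ring
    _ < M_c*(b*M) - M_c*(b*M) := by linarith
    _ = 0 := by ring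


theorem hM_negative (k l L₀ M M_c : ℝ) (hk : 0 < k) (hkl : k ≤ l)
    (hL₀ : 0 < L₀) (hM : 0 < M) (hMc : 0 < M_c) :
    BddBelow (HC k l L₀ M_c '' {f | FM k l L₀ M f}) ∧
      (HC k l L₀ M_c '' {f | FM k l L₀ M f}).Nonempty ∧
      sInf (HC k l L₀ M_c '' {f | FM k l L₀ M f}) < 0 := by
  obtain ⟨f₀, hFM₀, hneg⟩ := exists_neg k l L₀ M M_c hk hkl hL₀ hM hMc
  have hbdd : BddBelow (HC k l L₀ M_c '' {f | FM k l L₀ M f}) := by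
    refine ⟨lowB L₀ M M_c, ?_⟩
    rintro y ⟨f, hf, rfl⟩
    exact HC_lower k l L₀ M M_c hL₀ hM hMc f hf
  have hmem : HC k l L₀ M_c f₀ ∈ HC k l L₀ M_c '' {f | FM k l L₀ M f} :=
    ⟨f₀, hFM₀, rfl⟩
  exact ⟨hbdd, ⟨_, hmem⟩, lt_of_le_of_lt (csInf_le hbdd hmem) hneg⟩
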